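/- arXiv:2208.13050 — 9 statements merged into one kernel-verified Lean document; each statement's English description precedes it below -/
import Mathlib

section
/- Every E-central semigroup is viable: if every idempotent of X commutes with every element of X, then for any x, y ∈ X with both xy and yx idempotent, one has xy = yx. -/
theorem stmt5 {X : Type*} [Semigroup X]
    (hEcentral : ∀ e : X, e * e = e → ∀ x : X, e * x = x * e) :
    ∀ x y : X, (x * y) * (x * y) = x * y → (y * x) * (y * x) = y * x →
      x * y = y * x := by
  intro x y hxy hyx
  have h1 : x * y = (x * y) * (y * x) := by
    calc x * y = (x * y) * (x * y) := hxy.symm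
    _ = x * ((y * x) * y) := by simp [mul_assoc]
    _ = x * (y * (y * x)) := by rw [hEcentral _ hyx y]
    _ = (x * y) * (y * x) := by simp [mul_assoc]
  have h2 : y * x = (x * y) * (y * x) := by
    calc y * x = (y * x) * (y * x) := hyx.symm
    _ = (y * (x * y)) * x := by simp [mul_assoc]
    _ = ((x * y) * y) * x := by rw [← hEcentral _ hxy y]
    _ = (x * y) * (y * x) := by simp [mul_assoc]
  exact h1.trans h2.symm
end

section
/- A semigroup X is viable if and only if it is E-separated: for any distinct idempotents x, y of a viable semigroup X there exists a semigroup homomorphism h : X → {0,1} (two-element semilattice with min) with h(x) ≠ h(y); and conversely, if for any distinct idempotents of X there is a separating homomorphism to 𝟚, then for all x, y ∈ X, xy, yx ∈ E(X) implies xy = yx. -/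
/-- A homomorphism to the two-element semilattice `{0,1}` with `min`,
represented as `Bool` with `false < true` and `min`. -/
def IsHom2 {X : Type*} [Semigroup X] (h : X → Bool) : Prop :=
  ∀ a b : X, h (a * b) = min (h a) (h b)

/-- The binary quasiorder: `x ≲ y` iff `h x ≤ h y` for every homomorphism
`h : X → 𝟚`. -/
def bq {X : Type*} [Semigroup X] (x y : X) : Prop :=
  ∀ h : X → Bool, IsHom2 h → h x ≤ h y

section Aux

variable {X : Type*} [Semigroup X]

private lemma rot1
    (V : ∀ x y : X, (x * y) * (x * y) = x * y → (y * x) * (y * x) = y * x → x * y = y * x)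
    {e a u b : X} (he : e * e = e) (h : (a * u) * b = e) :
    ((u * b) * e) * a = e := by
  have key : a * ((u * b) * e) = e := by
    rw [← mul_assoc, ← mul_assoc, h, he]
  have h1 : (a * ((u * b) * e)) * (a * ((u * b) * e)) = a * ((u * b) * e) := by
    rw [key]; exact he
  have h2 : (((u * b) * e) * a) * (((u * b) * e) * a) = ((u * b) * e) * a := by
    have inner : a * (((u * b) * e) * a) = e * a := by rw [← mul_assoc, key]
    rw [mul_assoc ((u * b) * e) a, inner, ← mul_assoc, mul_assoc (u * b) e e, he]
  have := V a ((u * b) * e) h1 h2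
  rw [← this, key]

private lemma rot2
    (V : ∀ x y : X, (x * y) * (x * y) = x * y → (y * x) * (y * x) = y * x → x * y = y * x)
    {e a u b : X} (he : e * e = e) (h : (a * u) * b = e) :
    ((b * e) * a) * u = e := by
  have key : ((e * a) * u) * b = e := by
    rw [mul_assoc e a u, mul_assoc, h, he]
  have h1 : (((e * a) * u) * b) * (((e * a) * u) * b) = ((e * a) * u) * b := by
    rw [key]; exact he
  have h2 : (b * ((e * a) * u)) * (b * ((e * a) * u)) = b * ((e * a) * u) := by
    have inner : ((e * a) * u) * (b * ((e * a) * u)) = ((e * a) * u) := by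
      rw [← mul_assoc, key, ← mul_assoc, ← mul_assoc, he]
    rw [mul_assoc b, inner]
  have := V ((e * a) * u) b h1 h2
  have hb : b * ((e * a) * u) = e := by rw [← this, key]
  calc ((b * e) * a) * u = b * ((e * a) * u) := by
        rw [mul_assoc b e a, mul_assoc]
    _ = e := hb

/-- closure of the "filter" under multiplication -/
private lemma mul_mem
    (V : ∀ x y : X, (x * y) * (x * y) = x * y → (y * x) * (y * x) = y * x → x * y = y * x)
    {e x y : X} (he : e * e = e)
    (hx : ∃ a b : X, (a * x) * b = e) (hy : ∃ a b : X, (a * y) * b = e) :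
    ∃ a b : X, (a * (x * y)) * b = e := by
  obtain ⟨a, b, hx⟩ := hx
  obtain ⟨c, d, hy⟩ := hy
  have P : ((b * e) * a) * x = e := rot2 V he hx
  have Q : ((y * d) * e) * c = e := rot1 V he hy
  refine ⟨(b * e) * a, (d * e) * c, ?_⟩
  calc (((b * e) * a) * (x * y)) * ((d * e) * c)
      = (((b * e) * a) * x) * (((y * d) * e) * c) := by
        simp only [mul_assoc]
    _ = e * e := by rw [P, Q]
    _ = e := he

/-- mutual membership for idempotents forces equality -/
private lemma mutual_eq
    (V : ∀ x y : X, (x * y) * (x * y) = x * y → (y * x) * (y * x) = y * x → x * y = y * x)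
    {e f : X} (he : e * e = e) (hf : f * f = f)
    (h1 : ∃ a b : X, (a * f) * b = e) (h2 : ∃ c d : X, (c * e) * d = f) :
    e = f := by
  obtain ⟨a, b, h1⟩ := h1
  obtain ⟨c, d, h2⟩ := h2
  have R1 : ((f * b) * e) * a = e := rot1 V he h1
  have hfe_e : f * e = e := by
    calc f * e = f * (((f * b) * e) * a) := by rw [R1]
      _ = (((f * f) * b) * e) * a := by simp only [mul_assoc]
      _ = e := by rw [hf, R1]
  have R2 : ((d * f) * c) * e = f := rot2 V hf h2
  have hfe_f : f * e = f := by
    calc f * e = (((d * f) * c) * e) * e := by rw [R2]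
      _ = ((d * f) * c) * (e * e) := by rw [mul_assoc]
      _ = f := by rw [he, R2]
  rw [← hfe_e, hfe_f]

end Aux

theorem stmt6 {X : Type*} [Semigroup X] :
    (∀ x y : X, (x * y) * (x * y) = x * y → (y * x) * (y * x) = y * x →
        x * y = y * x) ↔
      (∀ x y : X, x * x = x → y * y = y → x ≠ y →
        ∃ h : X → Bool, IsHom2 h ∧ h x ≠ h y) := by
  constructor
  · intro V x y hx hy hxy
    classical
    -- the indicator of the filter of an idempotent e is a hom
    have hom : ∀ e : X, e * e = e →
        IsHom2 (fun z => if ∃ a b : X, (a * z) * b = e then true else false) := by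
      intro e he u v
      by_cases hu : ∃ a b : X, (a * u) * b = e
      · by_cases hv : ∃ a b : X, (a * v) * b = e
        · have huv : ∃ a b : X, (a * (u * v)) * b = e := mul_mem V he hu hv
          simp [hu, hv, huv]
        · have huv : ¬ ∃ a b : X, (a * (u * v)) * b = e := by
            rintro ⟨a, b, hab⟩
            exact hv ⟨a * u, b, by rw [← hab]; simp only [mul_assoc]⟩
          simp [hu, hv, huv]
      · have huv : ¬ ∃ a b : X, (a * (u * v)) * b = e := by
          rintro ⟨a, b, hab⟩
          exact hu ⟨a, v * b, by rw [← hab]; simp only [mul_assoc]⟩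
        simp [hu, huv]
    have self_mem : ∀ e : X, e * e = e → ∃ a b : X, (a * e) * b = e := by
      intro e he
      exact ⟨e, e, by rw [he, he]⟩
    by_cases hyx : ∃ a b : X, (a * y) * b = x
    · -- then e := y's filter must exclude x
      have hxy' : ¬ ∃ a b : X, (a * x) * b = y := by
        intro hxy''
        exact hxy (mutual_eq V hx hy hyx hxy'')
      refine ⟨_, hom y hy, ?_⟩
      simp [hxy', self_mem y hy]
    · refine ⟨_, hom x hx, ?_⟩
      simp [hyx, self_mem x hx]
  · intro E x y hxy hyx
    by_contra hne
    obtain ⟨h, hh, hne'⟩ := E (x * y) (y * x) hxy hyx hne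
    exact hne' (by rw [hh x y, hh y x, min_comm])
end

section
/- In any semigroup X, if x and y are elements of the Clifford part H(X) (the union of all maximal subgroups) with xy = yx, then xy ∈ H(X). -/
/-- `x` belongs to the maximal subgroup `H_e` of the semigroup `X` containing the
idempotent `e`, i.e. the group of units of the monoid `eXe` with identity `e`. -/
def memH {X : Type*} [Semigroup X] (e x : X) : Prop :=
  e * x = x ∧ x * e = x ∧ ∃ y : X, e * y = y ∧ y * e = y ∧ x * y = e ∧ y * x = e

/-- The Clifford part `H(X)`: the union of all maximal subgroups. -/
def CliffordPart (X : Type*) [Semigroup X] : Set X :=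
  {x | ∃ e : X, e * e = e ∧ memH e x}

/-- `spow x n` is the power `x^(n+1)` in a semigroup. -/
def spow {X : Type*} [Semigroup X] (x : X) : ℕ → X
  | 0 => x
  | n + 1 => spow x n * x

private lemma key {X : Type*} [Semigroup X] {e x x' y : X}
    (hex : e * x = x) (hxe : x * e = x)
    (hex' : e * x' = x') (hx'e : x' * e = x')
    (hxx' : x * x' = e) (hx'x : x' * x = e)
    (hc : x * y = y * x) : e * y = y * e ∧ x' * y = y * x' := by
  have hey : e * y = x' * (y * x) := by rw [← hc, ← mul_assoc, hx'x]
  have hye : y * e = (x * y) * x' := by rw [hc, mul_assoc, hxx']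
  have h1 : e * (y * e) = y * e := by
    calc e * (y * e) = (e * x) * (y * x') := by rw [hye]; simp only [mul_assoc]
      _ = x * (y * x') := by rw [hex]
      _ = y * e := by rw [← mul_assoc, ← hye]
  have h2 : e * (y * e) = e * y := by
    calc e * (y * e) = (e * y) * e := by rw [mul_assoc]
      _ = x' * (y * (x * e)) := by rw [hey]; simp only [mul_assoc]
      _ = e * y := by rw [hxe, ← hey]
  have heq : e * y = y * e := by rw [← h2, h1]
  refine ⟨heq, ?_⟩
  calc x' * y = x' * (e * y) := by rw [← mul_assoc, hx'e]
    _ = (x' * y) * e := by rw [heq, mul_assoc]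
    _ = x' * ((y * x) * x') := by rw [← hxx']; simp only [mul_assoc]
    _ = (x' * x) * (y * x') := by rw [← hc]; simp only [mul_assoc]
    _ = e * (y * x') := by rw [hx'x]
    _ = (y * e) * x' := by rw [← mul_assoc, heq]
    _ = y * x' := by rw [mul_assoc, hex']

theorem stmt7 {X : Type*} [Semigroup X] (x y : X)
    (hx : x ∈ CliffordPart X) (hy : y ∈ CliffordPart X) (hcomm : x * y = y * x) :
    x * y ∈ CliffordPart X := by
  obtain ⟨e, hee, hex, hxe, x', hex', hx'e, hxx', hx'x⟩ := hx
  obtain ⟨f, hff, hfy, hyf, y', hfy', hy'f, hyy', hy'y⟩ := hy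
  obtain ⟨hey, hx'y⟩ := key hex hxe hex' hx'e hxx' hx'x hcomm
  obtain ⟨hfx, hy'x⟩ := key hfy hyf hfy' hy'f hyy' hy'y hcomm.symm
  obtain ⟨hey', hx'y'⟩ := key hex hxe hex' hx'e hxx' hx'x hy'x.symm
  obtain ⟨hef, hx'f⟩ := key hex hxe hex' hx'e hxx' hx'x hfx.symm
  obtain ⟨hfx', hy'x'⟩ := key hfy hyf hfy' hy'f hyy' hy'y hx'y.symm
  refine ⟨e * f, ?_, ?_, ?_, x' * y', ?_, ?_, ?_, ?_⟩
  · calc (e * f) * (e * f) = e * ((f * e) * f) := by simp only [mul_assoc]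
      _ = (e * e) * (f * f) := by rw [← hef]; simp only [mul_assoc]
      _ = e * f := by rw [hee, hff]
  · calc (e * f) * (x * y) = e * ((f * x) * y) := by simp only [mul_assoc]
      _ = (e * x) * (f * y) := by rw [hfx]; simp only [mul_assoc]
      _ = x * y := by rw [hex, hfy]
  · calc (x * y) * (e * f) = x * ((y * e) * f) := by simp only [mul_assoc]
      _ = (x * e) * (y * f) := by rw [← hey]; simp only [mul_assoc]
      _ = x * y := by rw [hxe, hyf]
  · calc (e * f) * (x' * y') = e * ((f * x') * y') := by simp only [mul_assoc]
      _ = (e * x') * (f * y') := by rw [← hx'f]; simp only [mul_assoc]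
      _ = x' * y' := by rw [hex', hfy']
  · calc (x' * y') * (e * f) = x' * ((y' * e) * f) := by simp only [mul_assoc]
      _ = (x' * e) * (y' * f) := by rw [← hey']; simp only [mul_assoc]
      _ = x' * y' := by rw [hx'e, hy'f]
  · calc (x * y) * (x' * y') = x * ((y * x') * y') := by simp only [mul_assoc]
      _ = (x * x') * (y * y') := by rw [← hx'y]; simp only [mul_assoc]
      _ = e * f := by rw [hxx', hyy']
  · calc (x' * y') * (x * y) = x' * ((y' * x) * y) := by simp only [mul_assoc]
      _ = (x' * x) * (y' * y) := by rw [hy'x]; simp only [mul_assoc]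
      _ = e * f := by rw [hx'x, hy'y]
end

section
/- For every idempotent e of a viable semigroup X, the maximal subgroup H_e is an ideal in the subsemigroup ⇑e = {x ∈ X : e ≲ x} (where ≲ is the binary quasiorder), and e commutes with every element of ⇑e. -/
namespace Stmt8Aux

variable {X : Type*} [Semigroup X]

/-- The filter generated by `e`: smallest subset containing `e` that is closed under
products and under taking factors of products. Its indicator is a hom to `{0,1}`. -/
inductive NeS (e : X) : X → Prop
  | base : NeS e e
  | mul : ∀ {a b}, NeS e a → NeS e b → NeS e (a * b)
  | left : ∀ {a b}, NeS e (a * b) → NeS e a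
  | right : ∀ {a b}, NeS e (a * b) → NeS e b

open Classical in
theorem neS_of_bq {e x : X} (hx : bq e x) : NeS e x := by
  have hh : IsHom2 (fun a => if NeS e a then true else false) := by
    intro a b
    by_cases hab : NeS e (a * b)
    · have ha : NeS e a := .left hab
      have hb : NeS e b := .right hab
      simp [hab, ha, hb]
    · have h2 : ¬(NeS e a ∧ NeS e b) := fun ⟨ha, hb⟩ => hab (.mul ha hb)
      by_cases ha : NeS e a <;> by_cases hb : NeS e b <;> simp_all
  have := hx _ hh
  simp only [NeS.base, if_true] at this
  by_cases h : NeS e x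
  · exact h
  · rw [if_neg h] at this; exact absurd this (by decide)

theorem memH_mul {e u v : X} (hu : memH e u) (hv : memH e v) : memH e (u * v) := by
  obtain ⟨heu, hue, u', heu', hu'e, huu', hu'u⟩ := hu
  obtain ⟨hev, hve, v', hev', hv'e, hvv', hv'v⟩ := hv
  refine ⟨?_, ?_, v' * u', ?_, ?_, ?_, ?_⟩
  · rw [← mul_assoc, heu]
  · rw [mul_assoc, hve]
  · rw [← mul_assoc, hev']
  · rw [mul_assoc, hu'e]
  · rw [← mul_assoc, mul_assoc u v v', hvv', hue, huu']
  · rw [← mul_assoc, mul_assoc v' u' u, hu'u, hv'e, hv'v]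

/-- The key invariant: it holds at `e` and is a "filter" property. -/
def QQ (e a : X) : Prop := memH e (e * a) ∧ memH e (a * e) ∧ e * a = a * e

theorem QQ_e {e : X} (he : e * e = e) : QQ e e := by
  have : memH e e := ⟨he, he, e, he, he, he, he⟩
  exact ⟨by rw [he]; exact this, by rw [he]; exact this, rfl⟩

theorem QQ_mul {e a b : X} (ha : QQ e a) (hb : QQ e b) : QQ e (a * b) := by
  obtain ⟨hea, hae, hca⟩ := ha
  obtain ⟨heb, hbe, hcb⟩ := hb
  have k1 : (e * a) * (e * b) = e * (a * b) := by
    rw [← mul_assoc (e*a) e b, hea.2.1, mul_assoc]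
  have k2 : (a * e) * (b * e) = (a * b) * e := by
    rw [mul_assoc a e (b*e), hbe.1, ← mul_assoc]
  have hc : e * (a * b) = (a * b) * e := by
    calc e * (a * b) = (e * a) * (e * b) := k1.symm
      _ = (a * e) * (b * e) := by rw [hca, hcb]
      _ = (a * b) * e := k2
  refine ⟨?_, ?_, hc⟩
  · rw [← k1]; exact memH_mul hea heb
  · rw [← k2]; exact memH_mul hae hbe

theorem QQ_left {e : X}
    (viable : ∀ a b : X, (a * b) * (a * b) = a * b → (b * a) * (b * a) = b * a →
      a * b = b * a)
    (he : e * e = e) {a b : X} (H : QQ e (a * b)) : QQ e a := by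
  obtain ⟨H1, _, _⟩ := H
  obtain ⟨heh, hhe, h', heh', hh'e, hhh', hh'h⟩ := H1
  have hab' : h' * (a * b) = e := by
    calc h' * (a * b) = (h' * e) * (a * b) := by rw [hh'e]
      _ = h' * (e * (a * b)) := by rw [mul_assoc]
      _ = e := hh'h
  have e1 : (e * a) * (b * h') = e := by
    calc (e * a) * (b * h') = e * (a * (b * h')) := mul_assoc _ _ _
      _ = e * ((a * b) * h') := by rw [← mul_assoc a b h']
      _ = (e * (a * b)) * h' := (mul_assoc _ _ _).symm
      _ = e := hhh'
  have treq : (b * h') * (e * a) = b * (h' * a) := by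
    calc (b * h') * (e * a) = b * (h' * (e * a)) := mul_assoc _ _ _
      _ = b * ((h' * e) * a) := by rw [← mul_assoc h' e a]
      _ = b * (h' * a) := by rw [hh'e]
  have t_idem : (b * (h' * a)) * (b * (h' * a)) = b * (h' * a) := by
    calc (b * (h' * a)) * (b * (h' * a))
        = b * ((h' * a) * (b * (h' * a))) := mul_assoc _ _ _
      _ = b * (h' * (a * (b * (h' * a)))) := by rw [mul_assoc h' a]
      _ = b * (h' * ((a * b) * (h' * a))) := by rw [← mul_assoc a b (h' * a)]
      _ = b * ((h' * (a * b)) * (h' * a)) := by rw [← mul_assoc h' (a * b) (h' * a)]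
      _ = b * (e * (h' * a)) := by rw [hab']
      _ = b * ((e * h') * a) := by rw [← mul_assoc e h' a]
      _ = b * (h' * a) := by rw [heh']
  have idem1 : ((e * a) * (b * h')) * ((e * a) * (b * h')) = (e * a) * (b * h') := by
    rw [e1, he]
  have idem2 : ((b * h') * (e * a)) * ((b * h') * (e * a)) = (b * h') * (e * a) := by
    rw [treq]; exact t_idem
  have comm := viable (e * a) (b * h') idem1 idem2
  have hte : (b * h') * (e * a) = e := comm.symm.trans e1
  have bh'a : b * (h' * a) = e := treq.symm.trans hte
  have bh'a2 : (b * h') * a = e := (mul_assoc b h' a).trans bh'a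
  have p_idem : (a * (b * h')) * (a * (b * h')) = a * (b * h') := by
    calc (a * (b * h')) * (a * (b * h'))
        = a * ((b * h') * (a * (b * h'))) := mul_assoc _ _ _
      _ = a * (b * (h' * (a * (b * h')))) := by rw [mul_assoc b h']
      _ = a * (b * (h' * ((a * b) * h'))) := by rw [← mul_assoc a b h']
      _ = a * (b * ((h' * (a * b)) * h')) := by rw [← mul_assoc h' (a * b) h']
      _ = a * (b * (e * h')) := by rw [hab']
      _ = a * (b * h') := by rw [heh']
  have idem3 : ((b * h') * a) * ((b * h') * a) = (b * h') * a := by rw [bh'a2]; exact he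
  have comm2 := viable a (b * h') p_idem idem3
  have pae : a * (b * h') = e := comm2.trans bh'a2
  have commae : a * e = e * a := by
    calc a * e = a * ((b * h') * (e * a)) := by rw [hte]
      _ = (a * (b * h')) * (e * a) := (mul_assoc _ _ _).symm
      _ = e * (e * a) := by rw [pae]
      _ = (e * e) * a := (mul_assoc _ _ _).symm
      _ = e * a := by rw [he]
  have need1 : e * (e * a) = e * a := by rw [← mul_assoc, he]
  have need2 : (e * a) * e = e * a := by
    calc (e * a) * e = e * (a * e) := mul_assoc _ _ _
      _ = e * (e * a) := by rw [commae]
      _ = e * a := need1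
  have mem_ea : memH e (e * a) := by
    refine ⟨need1, need2, e * ((b * h') * e), ?_, ?_, ?_, ?_⟩
    · rw [← mul_assoc, he]
    · calc (e * ((b * h') * e)) * e = e * (((b * h') * e) * e) := mul_assoc _ _ _
        _ = e * ((b * h') * (e * e)) := by rw [mul_assoc (b * h') e e]
        _ = e * ((b * h') * e) := by rw [he]
    · calc (e * a) * (e * ((b * h') * e))
          = ((e * a) * e) * ((b * h') * e) := (mul_assoc _ _ _).symm
        _ = (e * a) * ((b * h') * e) := by rw [need2]
        _ = ((e * a) * (b * h')) * e := (mul_assoc _ _ _).symm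
        _ = e * e := by rw [e1]
        _ = e := he
    · calc (e * ((b * h') * e)) * (e * a)
          = e * (((b * h') * e) * (e * a)) := mul_assoc _ _ _
        _ = e * ((b * h') * (e * (e * a))) := by rw [mul_assoc (b * h') e (e * a)]
        _ = e * ((b * h') * (e * a)) := by rw [need1]
        _ = e * e := by rw [hte]
        _ = e := he
  refine ⟨mem_ea, ?_, commae.symm⟩
  rw [commae]; exact mem_ea

theorem QQ_right {e : X}
    (viable : ∀ a b : X, (a * b) * (a * b) = a * b → (b * a) * (b * a) = b * a →
      a * b = b * a)
    (he : e * e = e) {a b : X} (H : QQ e (a * b)) : QQ e b := by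
  obtain ⟨_, H2, _⟩ := H
  obtain ⟨hek, hke, k', hek', hk'e, hkk', hk'k⟩ := H2
  have abk' : (a * b) * k' = e := by
    calc (a * b) * k' = (a * b) * (e * k') := by rw [hek']
      _ = ((a * b) * e) * k' := (mul_assoc _ _ _).symm
      _ = e := hkk'
  have e1 : (k' * a) * (b * e) = e := by
    calc (k' * a) * (b * e) = k' * (a * (b * e)) := mul_assoc _ _ _
      _ = k' * ((a * b) * e) := by rw [← mul_assoc a b e]
      _ = e := hk'k
  have seq : (b * e) * (k' * a) = b * (k' * a) := by
    calc (b * e) * (k' * a) = b * (e * (k' * a)) := mul_assoc _ _ _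
      _ = b * ((e * k') * a) := by rw [← mul_assoc e k' a]
      _ = b * (k' * a) := by rw [hek']
  have s_idem : (b * (k' * a)) * (b * (k' * a)) = b * (k' * a) := by
    calc (b * (k' * a)) * (b * (k' * a))
        = b * ((k' * a) * (b * (k' * a))) := mul_assoc _ _ _
      _ = b * (k' * (a * (b * (k' * a)))) := by rw [mul_assoc k' a]
      _ = b * (k' * ((a * b) * (k' * a))) := by rw [← mul_assoc a b (k' * a)]
      _ = b * (k' * (((a * b) * k') * a)) := by rw [← mul_assoc (a * b) k' a]
      _ = b * (k' * (e * a)) := by rw [abk']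
      _ = b * ((k' * e) * a) := by rw [← mul_assoc k' e a]
      _ = b * (k' * a) := by rw [hk'e]
  have idem1 : ((b * e) * (k' * a)) * ((b * e) * (k' * a)) = (b * e) * (k' * a) := by
    rw [seq]; exact s_idem
  have idem2 : ((k' * a) * (b * e)) * ((k' * a) * (b * e)) = (k' * a) * (b * e) := by
    rw [e1]; exact he
  have comm := viable (b * e) (k' * a) idem1 idem2
  have hse : (b * e) * (k' * a) = e := comm.trans e1
  have bk'a : b * (k' * a) = e := seq.symm.trans hse
  have kab_idem : ((k' * a) * b) * ((k' * a) * b) = (k' * a) * b := by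
    rw [mul_assoc k' a b]
    calc (k' * (a * b)) * (k' * (a * b))
        = k' * ((a * b) * (k' * (a * b))) := mul_assoc _ _ _
      _ = k' * (((a * b) * k') * (a * b)) := by rw [← mul_assoc (a * b) k' (a * b)]
      _ = k' * (e * (a * b)) := by rw [abk']
      _ = (k' * e) * (a * b) := (mul_assoc _ _ _).symm
      _ = k' * (a * b) := by rw [hk'e]
  have idem3 : (b * (k' * a)) * (b * (k' * a)) = b * (k' * a) := by rw [bk'a]; exact he
  have comm2 := viable b (k' * a) idem3 kab_idem
  have k'ab : (k' * a) * b = e := comm2.symm.trans bk'a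
  have commbe : e * b = b * e := by
    calc e * b = (b * (k' * a)) * b := by rw [bk'a]
      _ = b * ((k' * a) * b) := mul_assoc _ _ _
      _ = b * e := by rw [k'ab]
  have need1 : e * (b * e) = b * e := by
    calc e * (b * e) = (e * b) * e := (mul_assoc _ _ _).symm
      _ = (b * e) * e := by rw [commbe]
      _ = b * (e * e) := mul_assoc _ _ _
      _ = b * e := by rw [he]
  have need2 : (b * e) * e = b * e := by rw [mul_assoc, he]
  have mem_be : memH e (b * e) := by
    refine ⟨need1, need2, e * ((k' * a) * e), ?_, ?_, ?_, ?_⟩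
    · rw [← mul_assoc, he]
    · calc (e * ((k' * a) * e)) * e = e * (((k' * a) * e) * e) := mul_assoc _ _ _
        _ = e * ((k' * a) * (e * e)) := by rw [mul_assoc (k' * a) e e]
        _ = e * ((k' * a) * e) := by rw [he]
    · calc (b * e) * (e * ((k' * a) * e))
          = ((b * e) * e) * ((k' * a) * e) := (mul_assoc _ _ _).symm
        _ = (b * e) * ((k' * a) * e) := by rw [need2]
        _ = ((b * e) * (k' * a)) * e := (mul_assoc _ _ _).symm
        _ = e * e := by rw [hse]
        _ = e := he
    · calc (e * ((k' * a) * e)) * (b * e)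
          = e * (((k' * a) * e) * (b * e)) := mul_assoc _ _ _
        _ = e * ((k' * a) * (e * (b * e))) := by rw [mul_assoc (k' * a) e (b * e)]
        _ = e * ((k' * a) * (b * e)) := by rw [need1]
        _ = e * e := by rw [e1]
        _ = e := he
  refine ⟨?_, mem_be, commbe⟩
  rw [commbe]; exact mem_be

end Stmt8Aux

theorem stmt8 {X : Type*} [Semigroup X]
    (viable : ∀ a b : X, (a * b) * (a * b) = a * b → (b * a) * (b * a) = b * a →
      a * b = b * a)
    (e : X) (he : e * e = e) :
    (∀ x : X, bq e x → ∀ g : X, memH e g → memH e (x * g) ∧ memH e (g * x)) ∧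
      (∀ x : X, bq e x → e * x = x * e) := by
  have main : ∀ x : X, Stmt8Aux.NeS e x → Stmt8Aux.QQ e x := by
    intro x hx
    induction hx with
    | base => exact Stmt8Aux.QQ_e he
    | mul _ _ iha ihb => exact Stmt8Aux.QQ_mul iha ihb
    | left _ ih => exact Stmt8Aux.QQ_left viable he ih
    | right _ ih => exact Stmt8Aux.QQ_right viable he ih
  constructor
  · intro x hbq g hg
    obtain ⟨hex, hxe, _⟩ := main x (Stmt8Aux.neS_of_bq hbq)
    have heg := hg.1
    have hge := hg.2.1
    constructor
    · rw [show x * g = (x * e) * g from by rw [mul_assoc, heg]]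
      exact Stmt8Aux.memH_mul hxe hg
    · rw [show g * x = g * (e * x) from by rw [← mul_assoc, hge]]
      exact Stmt8Aux.memH_mul hg hex
  · intro x hbq
    exact (main x (Stmt8Aux.neS_of_bq hbq)).2.2
end

section
/- For any idempotent e of a semigroup X, the product of any element of √H_e := {x ∈ X : ∃ n ∈ ℕ, x^n ∈ H_e} with any element of H_e (in either order) lies in H_e. -/
section aux
variable {X : Type*} [Semigroup X]

lemma spow_comm (x : X) (n : ℕ) : x * spow x n = spow x n * x := by
  induction n with
  | zero => rfl
  | succ k ih =>
    show x * (spow x k * x) = spow x k * x * x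
    rw [← mul_assoc, ih]

lemma memH_mul {e u v : X} (hu : memH e u) (hv : memH e v) : memH e (u * v) := by
  obtain ⟨hu1, hu2, y, hy1, hy2, hy3, hy4⟩ := hu
  obtain ⟨hv1, hv2, z, hz1, hz2, hz3, hz4⟩ := hv
  refine ⟨?_, ?_, z * y, ?_, ?_, ?_, ?_⟩
  · rw [← mul_assoc, hu1]
  · rw [mul_assoc, hv2]
  · rw [← mul_assoc, hz1]
  · rw [mul_assoc, hy2]
  · rw [mul_assoc, ← mul_assoc v, hz3, hy1, hy3]
  · rw [mul_assoc, ← mul_assoc y, hy4, hv1, hz4]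

lemma memH_inv {e g y : X} (hy1 : e * y = y) (hy2 : y * e = y)
    (hy3 : g * y = e) (hy4 : y * g = e) (hg : memH e g) : memH e y :=
  ⟨hy1, hy2, g, hg.1, hg.2.1, hy4, hy3⟩

lemma memH_step {e : X} (he : e * e = e) (x : X) (n : ℕ)
    (h : memH e (spow x n)) : memH e (spow x (n + 1)) := by
  obtain ⟨h1, h2, y, hy1, hy2, hy3, hy4⟩ := h
  set a := spow x n with ha
  have hxa : x * a = a * x := spow_comm x n
  have heb : e * (a * x) = a * x := by rw [← mul_assoc, h1]
  have hbe : (a * x) * e = a * x := by rw [← hxa, mul_assoc, h2]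
  cases n with
  | zero =>
    have h3 : x * y = e := hy3
    have h4 : y * x = e := hy4
    have h1' : e * x = x := h1
    refine ⟨heb, hbe, y * y, ?_, ?_, ?_, ?_⟩
    · rw [← mul_assoc, hy1]
    · rw [mul_assoc, hy2]
    · show (x * x) * (y * y) = e
      rw [mul_assoc, ← mul_assoc x y, h3, hy1, h3]
    · show (y * y) * (x * x) = e
      rw [mul_assoc, ← mul_assoc y x, h4, h1', h4]
  | succ k =>
    set p := spow x k with hp
    have hap : a = p * x := rfl
    have hax : a = x * p := (spow_comm x k).symm
    set c := e * (p * (y * y)) with hc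
    have hec : e * c = c := by rw [hc, ← mul_assoc, he]
    have hce : c * e = c := by
      rw [hc]
      simp only [mul_assoc]
      rw [hy2]
    have hbc : (a * x) * c = e := by
      calc (a * x) * c
          = ((a * x) * e) * (p * (y * y)) := by rw [hc]; simp only [mul_assoc]
        _ = (a * x) * (p * (y * y)) := by rw [hbe]
        _ = (a * (x * p)) * (y * y) := by simp only [mul_assoc]
        _ = (a * a) * (y * y) := by rw [← hax]
        _ = (a * (a * y)) * y := by simp only [mul_assoc]
        _ = (a * e) * y := by rw [hy3]
        _ = a * y := by rw [h2]
        _ = e := hy3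
    set cl := (y * y) * (p * e) with hcl
    have hclb : cl * (a * x) = e := by
      calc cl * (a * x)
          = (y * (y * (p * (e * a)))) * x := by rw [hcl]; simp only [mul_assoc]
        _ = (y * (y * (p * a))) * x := by rw [h1]
        _ = (y * y) * (p * (a * x)) := by simp only [mul_assoc]
        _ = (y * y) * (p * (x * a)) := by rw [hxa]
        _ = (y * y) * ((p * x) * a) := by simp only [mul_assoc]
        _ = (y * (y * a)) * a := by rw [← hap]; simp only [mul_assoc]
        _ = (y * e) * a := by rw [hy4]
        _ = y * a := by rw [hy2]
        _ = e := hy4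
    have hccl : c = cl := by
      calc c = e * c := hec.symm
        _ = (cl * (a * x)) * c := by rw [hclb]
        _ = cl * ((a * x) * c) := by rw [mul_assoc]
        _ = cl * e := by rw [hbc]
        _ = (y * y) * (p * (e * e)) := by rw [hcl]; simp only [mul_assoc]
        _ = (y * y) * (p * e) := by rw [he]
        _ = cl := hcl.symm
    have hcb : c * (a * x) = e := by rw [hccl]; exact hclb
    exact ⟨heb, hbe, c, hec, hce, hbc, hcb⟩

end aux

theorem stmt10 {X : Type*} [Semigroup X] (e : X) (he : e * e = e)
    (x : X) (hx : ∃ n : ℕ, memH e (spow x n))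
    (g : X) (hg : memH e g) :
    memH e (x * g) ∧ memH e (g * x) := by
  obtain ⟨n, hn⟩ := hx
  obtain ⟨h1, h2, y, hy1, hy2, hy3, hy4⟩ := hn
  have hyH : memH e y := memH_inv hy1 hy2 hy3 hy4 ⟨h1, h2, y, hy1, hy2, hy3, hy4⟩
  have hstep : memH e (spow x (n + 1)) :=
    memH_step he x n ⟨h1, h2, y, hy1, hy2, hy3, hy4⟩
  constructor
  · have hxg : x * g = spow x (n + 1) * (y * g) := by
      calc x * g = x * (e * g) := by rw [hg.1]
        _ = x * ((spow x n * y) * g) := by rw [hy3]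
        _ = (x * spow x n) * (y * g) := by rw [mul_assoc, ← mul_assoc x]
        _ = spow x (n + 1) * (y * g) := by rw [spow_comm]; rfl
    rw [hxg]
    exact memH_mul hstep (memH_mul hyH hg)
  · have hgx : g * x = (g * y) * spow x (n + 1) := by
      calc g * x = (g * e) * x := by rw [hg.2.1]
        _ = (g * (y * spow x n)) * x := by rw [hy4]
        _ = (g * y) * (spow x n * x) := by rw [mul_assoc, mul_assoc, mul_assoc]
        _ = (g * y) * spow x (n + 1) := rfl
    rw [hgx]
    exact memH_mul (memH_mul hg hyH) hstep
end

section
/- Let ℂ be a class of T₁ topological semigroups. If X is an injectively ℂ-closed semigroup, then the semigroup X¹ obtained by adjoining an external identity element is injectively ℂ-closed. -/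
universe u

/-- A bundled topological semigroup: a type with a topology and a continuous
associative multiplication. -/
structure TopSemigroup : Type (u + 1) where
  carrier : Type u
  [top : TopologicalSpace carrier]
  [sg : Semigroup carrier]
  continuous_mul : Continuous fun p : carrier × carrier => p.1 * p.2

attribute [instance] TopSemigroup.top TopSemigroup.sg

/-- A (discrete) semigroup `X` is injectively `C`-closed if for every injective
homomorphism `h : X → Y` into a topological semigroup `Y ∈ C` the image of `h`
is closed in `Y`. (Every map from a discrete space is continuous.) -/
def InjectivelyClosed (C : Set TopSemigroup.{u}) (X : Type u) [Semigroup X] : Prop :=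
  ∀ Y ∈ C, ∀ h : X →ₙ* Y.carrier, Function.Injective h → IsClosed (Set.range h)

/-- If every member of `C` is a `T₁` topological semigroup and `X` is injectively
`C`-closed, then the semigroup `X¹ = X ∪ {1}` obtained by adjoining an external
identity is injectively `C`-closed. -/
theorem stmt11 (C : Set TopSemigroup.{u}) (hT1 : ∀ Y ∈ C, T1Space Y.carrier)
    (X : Type u) [Semigroup X] (hX : InjectivelyClosed C X) :
    InjectivelyClosed C (WithOne X) := by
  intro Y hY h hinj
  haveI := hT1 Y hY
  have h' : X →ₙ* Y.carrier := h.comp (WithOne.coeMulHom)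
  have hrange : Set.range h = insert (h 1) (Set.range (h.comp (WithOne.coeMulHom))) := by
    ext y
    constructor
    · rintro ⟨x, rfl⟩
      refine WithOne.cases_on x (Set.mem_insert _ _) (fun a => Set.mem_insert_of_mem _ ⟨a, rfl⟩)
    · rintro (rfl | ⟨a, rfl⟩)
      · exact ⟨1, rfl⟩
      · exact ⟨a, rfl⟩
  rw [hrange, Set.insert_eq]
  exact isClosed_singleton.union (hX Y hY (h.comp WithOne.coeMulHom)
    (fun a b hab => (WithOne.coe_inj).mp (hinj hab)))
end

section
/- The semigroup X = (ℕ, *) (with x*y = 1 for distinct odd x,y ≥ 3; x*y = 2n if {x,y} ⊆ {2n,2n+1}; x*y = 0 otherwise) is nonsingular: there is no infinite subset A ⊆ X such that A*A is a singleton. -/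
/-- The semigroup operation on `ℕ` from Example 1 (Example ex:main of the paper):
`x * y = 1` if `x ≠ y` are both odd and `≥ 3`; `x * y = 2n` if
`{x, y} ⊆ {2n, 2n+1}` (equivalently `x / 2 = y / 2 = n`); and `x * y = 0`
otherwise. -/
def star (x y : ℕ) : ℕ :=
  if x % 2 = 1 ∧ y % 2 = 1 ∧ 3 ≤ x ∧ 3 ≤ y ∧ x ≠ y then 1
  else if x / 2 = y / 2 then 2 * (x / 2)
  else 0

theorem stmt15 :
    ¬ ∃ A : Set ℕ, A.Infinite ∧ ∃ c : ℕ, Set.image2 star A A = {c} := by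
  rintro ⟨A, hA, c, hc⟩
  have hsub : A ⊆ Set.Iic (c + 1) := by
    intro x hx
    have hmem : star x x ∈ Set.image2 star A A := Set.mem_image2_of_mem hx hx
    rw [hc, Set.mem_singleton_iff] at hmem
    have hxx : star x x = 2 * (x / 2) := by
      unfold _root_.star
      rw [if_neg (by tauto), if_pos rfl]
    have h2 : 2 * (x / 2) = c := hxx ▸ hmem
    have := Nat.div_add_mod x 2
    simp only [Set.mem_Iic]
    omega
  exact hA (Set.Finite.subset (Set.finite_Iic _) hsub)
end

section
/- The semigroup X = (ℕ, *) (with x*y = 1 for distinct odd x,y ≥ 3; x*y = 2n if {x,y} ⊆ {2n,2n+1}; x*y = 0 otherwise) is chain-finite: every chain in the natural partial order on idempotents has at most 2 elements, and more generally any infinite subset I contains x, y with x*y ∉ {x, y}. -/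
lemma star_idem_even {e : ℕ} (h : _root_.star e e = e) : e % 2 = 0 := by
  unfold _root_.star at h
  rw [if_neg (by simp), if_pos rfl] at h
  omega

lemma star_even_even {x y : ℕ} (hx : x % 2 = 0) (hy : y % 2 = 0) (hxy : x ≠ y) :
    _root_.star x y = 0 := by
  unfold _root_.star
  rw [if_neg (by omega), if_neg (by omega)]

theorem stmt16 :
    (∀ C : Set ℕ, (∀ e ∈ C, star e e = e) →
      IsChain (fun a b => star a b = a ∧ star b a = a) C →
      ∀ a ∈ C, ∀ b ∈ C, ∀ c ∈ C, a = b ∨ a = c ∨ b = c) ∧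
      (∀ I : Set ℕ, I.Infinite →
        ∃ x ∈ I, ∃ y ∈ I, star x y ≠ x ∧ star x y ≠ y) := by
  constructor
  · intro C hid hchain a ha b hb c hc
    -- any two distinct comparable elements: the smaller is 0
    have key : ∀ x ∈ C, ∀ y ∈ C, x ≠ y → x = 0 ∨ y = 0 := by
      intro x hx y hy hxy
      have hxe := star_idem_even (hid x hx)
      have hye := star_idem_even (hid y hy)
      rcases hchain hx hy hxy with ⟨h1, _⟩ | ⟨h1, _⟩
      · left; rw [star_even_even hxe hye hxy] at h1; omega
      · right; rw [star_even_even hye hxe (Ne.symm hxy)] at h1; omega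
    by_contra h
    push_neg at h
    obtain ⟨hab, hac, hbc⟩ := h
    rcases key a ha b hb hab with h1 | h1 <;>
      rcases key a ha c hc hac with h2 | h2 <;>
      rcases key b hb c hc hbc with h3 | h3 <;> omega
  · intro I hI
    by_cases h : ∃ x ∈ I, ∃ y ∈ I, x ≠ y ∧ x % 2 = 1 ∧ y % 2 = 1 ∧ 3 ≤ x ∧ 3 ≤ y
    · obtain ⟨x, hx, y, hy, hxy, h1, h2, h3, h4⟩ := h
      refine ⟨x, hx, y, hy, ?_⟩
      have : _root_.star x y = 1 := by
        unfold _root_.star; rw [if_pos ⟨h1, h2, h3, h4, hxy⟩]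
      omega
    · -- odd elements ≥ 3 of I form a subsingleton; so evens are infinite
      push_neg at h
      set O : Set ℕ := {n | n ∈ I ∧ n % 2 = 1} with hO
      have hOfin : O.Finite := by
        have : O ⊆ insert 1 {n | n ∈ I ∧ n % 2 = 1 ∧ 3 ≤ n} := by
          intro n ⟨hn1, hn2⟩
          by_cases hn3 : 3 ≤ n
          · exact Set.mem_insert_of_mem _ ⟨hn1, hn2, hn3⟩
          · left; omega
        refine Set.Finite.subset ?_ this
        refine Set.Finite.insert 1 ?_
        apply Set.Subsingleton.finite
        intro x ⟨hx1, hx2, hx3⟩ y ⟨hy1, hy2, hy3⟩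
        by_contra hxy
        have := h x hx1 y hy1 hxy hx2 hy2 hx3; omega
      have hE : (I \ O).Infinite := hI.diff hOfin
      obtain ⟨x, hx, hx0⟩ := hE.exists_gt 0
      obtain ⟨y, hy, hxy⟩ := hE.exists_gt x
      have hxe : x % 2 = 0 := by
        rcases hx with ⟨hxI, hxO⟩
        simp only [hO, Set.mem_setOf_eq, not_and] at hxO
        have := hxO hxI; omega
      have hye : y % 2 = 0 := by
        rcases hy with ⟨hyI, hyO⟩
        simp only [hO, Set.mem_setOf_eq, not_and] at hyO
        have := hyO hyI; omega
      refine ⟨x, hx.1, y, hy.1, ?_⟩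
      rw [star_even_even hxe hye (by omega)]
      omega
end

section
/- Let X be a viable semigroup and e ∈ E(X) an idempotent. Then E(X) ∩ ⇑e = ↑e and E(X) ∩ ⇓e = ↓e, where ↑e, ↓e are with respect to the natural partial order on idempotents and ⇑e, ⇓e are with respect to the binary quasiorder. -/
def Viable (X : Type*) [Semigroup X] : Prop :=
  ∀ a b : X, a * b * (a * b) = a * b → b * a * (b * a) = b * a → a * b = b * a

section

variable {X : Type*} [Semigroup X]

def IdealDvd (z e : X) : Prop :=
  ∃ u v : X, u * z * v = e

theorem IdealDvd.of_mul_left {a b e : X} (h : IdealDvd (a * b) e) : IdealDvd a e := by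
  obtain ⟨u, v, huv⟩ := h
  exact ⟨u, b * v, by rw [← huv]; simp only [mul_assoc]⟩

theorem IdealDvd.of_mul_right {a b e : X} (h : IdealDvd (a * b) e) : IdealDvd b e := by
  obtain ⟨u, v, huv⟩ := h
  exact ⟨u * a, v, by rw [← huv]; simp only [mul_assoc]⟩

theorem bq_of_mul_eq_left {e x : X} (hex : e * x = e) : bq e x := by
  intro h hh
  calc h e = min (h e) (h x) := by rw [← hh, hex]
    _ ≤ h x := min_le_right _ _

namespace Viable

variable (hX : Viable X) {e : X} (he : IsIdempotentElem e)
include hX he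

theorem swap_mul_self_eq {a b : X} (hab : a * b = e) : b * a * (b * a) = e := by
  have hcube : b * a * (b * a) * (b * a) = b * a * (b * a) := by
    calc b * a * (b * a) * (b * a) = b * ((a * b) * (a * b)) * a := by simp only [mul_assoc]
      _ = b * (a * b) * a := by rw [hab, he.eq]
      _ = b * a * (b * a) := by simp only [mul_assoc]
  -- Viability for the pair `(a(ba), b)`: the two products are `(ab)² = e` and `(ba)²`.
  have huv : a * (b * a) * b = e := by
    calc a * (b * a) * b = a * b * (a * b) := by simp only [mul_assoc]
      _ = e := by rw [hab, he.eq]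
  have hvu : b * (a * (b * a)) = b * a * (b * a) := by simp only [mul_assoc]
  have hvu_idem : b * (a * (b * a)) * (b * (a * (b * a))) = b * (a * (b * a)) := by
    rw [hvu, ← mul_assoc (b * a * (b * a)), hcube, hcube]
  rw [← hvu, ← hX _ _ (by rw [huv, he.eq]) hvu_idem, huv]

theorem idealDvd_mul_iff {a b : X} : IdealDvd (a * b) e ↔ IdealDvd a e ∧ IdealDvd b e := by
  refine ⟨fun h => ⟨h.of_mul_left, h.of_mul_right⟩, ?_⟩
  rintro ⟨⟨u, v, hu⟩, ⟨p, q, hp⟩⟩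
  have ha : v * (u * a) * (v * (u * a)) = e := hX.swap_mul_self_eq he hu
  have hb : b * q * p * (b * q * p) = e :=
    hX.swap_mul_self_eq he (a := p) (b := b * q) (by rw [← hp, mul_assoc])
  refine ⟨v * u * a * (v * u), q * p * (b * (q * p)), ?_⟩
  calc v * u * a * (v * u) * (a * b) * (q * p * (b * (q * p)))
      = v * (u * a) * (v * (u * a)) * (b * q * p * (b * q * p)) := by simp only [mul_assoc]
    _ = e := by rw [ha, hb, he.eq]

open Classical in
theorem isHom2_idealDvd : IsHom2 fun z => decide (IdealDvd z e) := by
  intro a b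
  change decide _ = min (decide _) (decide _)
  rw [hX.idealDvd_mul_iff he, Bool.decide_and]
  cases decide (IdealDvd a e) <;> rfl

theorem mul_eq_of_idealDvd {x : X} (hx : IsIdempotentElem x) (h : IdealDvd x e) :
    e * x = e ∧ x * e = e := by
  obtain ⟨u, v, huv⟩ := h
  have hleft : v * u * x * (v * u * x) = e := by
    simpa only [mul_assoc] using hX.swap_mul_self_eq he (a := u * x) (b := v) huv
  have hright : x * v * u * (x * v * u) = e := by
    simpa only [mul_assoc] using hX.swap_mul_self_eq he (a := u) (b := x * v)
      (by rw [← huv, mul_assoc])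
  constructor
  · rw [← hleft]; simp only [mul_assoc, hx.eq]
  · rw [← hright]; simp only [← mul_assoc, hx.eq]

open Classical in
theorem bq_iff {x : X} (hx : IsIdempotentElem x) : bq e x ↔ e * x = e ∧ x * e = e := by
  refine ⟨fun h => hX.mul_eq_of_idealDvd he hx ?_, fun h => bq_of_mul_eq_left h.1⟩
  have hle := h _ (hX.isHom2_idealDvd he)
  have he_dvd : IdealDvd e e := ⟨e, e, by rw [he.eq, he.eq]⟩
  rw [decide_eq_true he_dvd] at hle
  exact of_decide_eq_true (hle rfl)

end Viable

end

/-- For a viable semigroup `X` and an idempotent `e`: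
`E(X) ∩ ⇑e = ↑e` and `E(X) ∩ ⇓e = ↓e`, i.e. for an idempotent `x`,
`e ≲ x` iff `e ≤ x` (meaning `ex = xe = e`), and `x ≲ e` iff `x ≤ e`
(meaning `xe = ex = x`). -/
theorem stmt18 {X : Type*} [Semigroup X]
    (viable : ∀ a b : X, (a * b) * (a * b) = a * b → (b * a) * (b * a) = b * a →
      a * b = b * a)
    (e : X) (he : e * e = e) :
    ∀ x : X, x * x = x →
      (bq e x ↔ (e * x = e ∧ x * e = e)) ∧
        (bq x e ↔ (x * e = x ∧ e * x = x)) := by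
  intro x hx
  exact ⟨Viable.bq_iff viable he hx, Viable.bq_iff viable hx he⟩
end
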